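/- arXiv:1406.3224 — 6 statements merged into one kernel-verified Lean document; each statement's English description precedes it below -/
import Mathlib

section
/- (Comparison lemma for finite-step dynamics.) Let M ∈ ℕ, M ≥ 1, L ∈ ℕ ∪ {∞}, k₀ ∈ {0,…,M−1}, and let χ be of class K∞ with χ(s) < s for all s > 0. Let y : ℕ → [0,∞) satisfy y((l+1)M + k₀) ≤ χ(y(lM + k₀)) for all l ∈ {0,…,L}. Then there exists a class-KL function β_{k₀} such that y(lM + k₀) ≤ β_{k₀}(y(k₀), lM + k₀) for all l ∈ {0,…,L}. Moreover, if the hypothesis holds for every k₀ ∈ {0,…,M−1}, then there exists a class-KL function β such that, with y_M^max := max{y(0),…,y(M−1)}, one has y(k) ≤ β(y_M^max, k) for all k ∈ {0,…,(L+1)M−1} (all k ∈ ℕ when L = ∞). -/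
open scoped NNReal

/-- A function `α : ℝ≥0 → ℝ≥0` is of class K if it is continuous, strictly
increasing and vanishes at 0. -/
def ClassK (α : ℝ≥0 → ℝ≥0) : Prop :=
  Continuous α ∧ StrictMono α ∧ α 0 = 0

/-- Class K∞: class K and unbounded. -/
def ClassKInf (α : ℝ≥0 → ℝ≥0) : Prop :=
  ClassK α ∧ Filter.Tendsto α Filter.atTop Filter.atTop

/-- Class KL functions. -/
def ClassKL (β : ℝ≥0 → ℝ≥0 → ℝ≥0) : Prop :=
  (∀ t, ClassK fun s => β s t) ∧
  ∀ s, 0 < s → Continuous (β s) ∧ StrictAnti (β s) ∧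
    Filter.Tendsto (β s) Filter.atTop (nhds 0)

/-- Positive definite function on [0,∞). -/
def PosDefFun (ρ : ℝ≥0 → ℝ≥0) : Prop :=
  Continuous ρ ∧ ρ 0 = 0 ∧ ∀ s, 0 < s → 0 < ρ s

variable {E F : Type*} [NormedAddCommGroup E] [NormedAddCommGroup F]

/-- Solution map of the discrete-time system x(k+1) = G(x(k),u(k)). -/
def sol (G : E → F → E) (ξ : E) (u : ℕ → F) : ℕ → E
  | 0 => ξ
  | k + 1 => G (sol G ξ u k) (u k)

/-- A bounded input. -/
def BddInput (u : ℕ → F) : Prop := BddAbove (Set.range fun k => ‖u k‖₊)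

/-- The sup-norm ‖u‖∞ of an input. -/
noncomputable def supNorm (u : ℕ → F) : ℝ≥0 := ⨆ k, ‖u k‖₊

/-- Global K-boundedness of the dynamics. -/
def GloballyKBounded (G : E → F → E) : Prop :=
  ∃ ω₁ ω₂ : ℝ≥0 → ℝ≥0, ClassK ω₁ ∧ ClassK ω₂ ∧
    ∀ ξ μ, ‖G ξ μ‖₊ ≤ ω₁ ‖ξ‖₊ + ω₂ ‖μ‖₊

/-- Proper and positive definite function. -/
def ProperPosDef (V : E → ℝ≥0) : Prop :=
  ∃ α₁ α₂ : ℝ≥0 → ℝ≥0, ClassKInf α₁ ∧ ClassKInf α₂ ∧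
    ∀ ξ, α₁ ‖ξ‖₊ ≤ V ξ ∧ V ξ ≤ α₂ ‖ξ‖₊

/-- Dissipative finite-step ISS Lyapunov function with a prescribed step M. -/
def DissFinStepLyapAt (G : E → F → E) (V : E → ℝ≥0) (M : ℕ) : Prop :=
  ProperPosDef V ∧ 1 ≤ M ∧
  ∃ σ ρ : ℝ≥0 → ℝ≥0, ClassK σ ∧ PosDefFun ρ ∧ ClassKInf (fun s => s - ρ s) ∧
    ∀ ξ u, BddInput u → V (sol G ξ u M) ≤ ρ (V ξ) + σ (supNorm u)

/-- Dissipative finite-step ISS Lyapunov function. -/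
def DissFinStepLyap (G : E → F → E) (V : E → ℝ≥0) : Prop :=
  ∃ M, DissFinStepLyapAt G V M

/-- Input-to-state stability. -/
def ISS (G : E → F → E) : Prop :=
  ∃ β γ, ClassKL β ∧ ClassK γ ∧
    ∀ ξ u, BddInput u → ∀ k : ℕ, ‖sol G ξ u k‖₊ ≤ β ‖ξ‖₊ k + γ (supNorm u)

/-- Exponential input-to-state stability. -/
def ExpISS (G : E → F → E) : Prop :=
  ∃ (C κ : ℝ≥0) (γ : ℝ≥0 → ℝ≥0), 1 ≤ C ∧ κ < 1 ∧ ClassK γ ∧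
    ∀ ξ u, BddInput u → ∀ k : ℕ, ‖sol G ξ u k‖₊ ≤ C * κ ^ k * ‖ξ‖₊ + γ (supNorm u)


section CmpAuxSection
open Filter
namespace CmpAux
noncomputable section

def g (j : ℕ) (u : ℝ) : ℝ := min 1 (Real.exp ((j : ℝ) + 1 - u))

lemma g_nonneg (j : ℕ) (u : ℝ) : 0 ≤ g j u :=
  le_min zero_le_one (Real.exp_pos _).le

lemma g_le_one (j : ℕ) (u : ℝ) : g j u ≤ 1 := min_le_left _ _

lemma g_anti (j : ℕ) : Antitone (g j) := fun u v huv =>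
  min_le_min le_rfl (Real.exp_le_exp.2 (by linarith))

lemma g_cont (j : ℕ) : Continuous (g j) :=
  continuous_const.min (Real.continuous_exp.comp (by continuity))

lemma g_eq_one {j : ℕ} {u : ℝ} (h : u ≤ (j : ℝ) + 1) : g j u = 1 :=
  min_eq_left (Real.one_le_exp (by linarith))

lemma g_mono_j (j : ℕ) (u : ℝ) : g j u ≤ g (j + 1) u :=
  min_le_min le_rfl (Real.exp_le_exp.2 (by push_cast; linarith))

lemma g_tendsto (j : ℕ) : Tendsto (g j) atTop (nhds 0) := by
  apply squeeze_zero (fun u => g_nonneg j u) (fun u => min_le_right _ _)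
  exact Real.tendsto_exp_atBot.comp
    (tendsto_atBot_add_const_left _ _ tendsto_neg_atTop_atBot)

/-- tent weights -/
def h : ℕ → ℝ → ℝ
  | 0, u => g 0 u
  | j + 1, u => g (j + 1) u - g j u

lemma h_nonneg (j : ℕ) (u : ℝ) : 0 ≤ h j u := by
  cases j with
  | zero => exact g_nonneg 0 u
  | succ j => exact sub_nonneg.2 (g_mono_j j u)

lemma h_cont (j : ℕ) : Continuous (h j) := by
  cases j with
  | zero => exact g_cont 0
  | succ j => exact (g_cont (j+1)).sub (g_cont j)

lemma sum_h (N : ℕ) (u : ℝ) : ∑ j ∈ Finset.range (N + 1), h j u = g N u := by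
  induction N with
  | zero => simp [h]
  | succ N ih => rw [Finset.sum_range_succ, ih]; simp [h]

lemma sum_h_le (N : ℕ) (u : ℝ) : ∑ j ∈ Finset.range N, h j u ≤ 1 := by
  cases N with
  | zero => simp
  | succ N => rw [sum_h]; exact g_le_one N u

lemma summable_h (u : ℝ) : Summable (fun j => h j u) :=
  summable_of_sum_range_le (fun j => h_nonneg j u) (fun N => sum_h_le N u)

variable (χ : ℝ≥0 → ℝ≥0)

/-- iterates -/
def a (s : ℝ≥0) (j : ℕ) : ℝ≥0 := χ^[j] s

variable {χ}
variable (hcont : Continuous χ) (hmono : StrictMono χ) (h0 : χ 0 = 0)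
  (hlt : ∀ s : ℝ≥0, 0 < s → χ s < s)

section
include h0 hlt

lemma chi_le (s : ℝ≥0) : χ s ≤ s := by
  rcases eq_or_lt_of_le (show (0 : ℝ≥0) ≤ s from zero_le) with h | h
  · simp [← h, h0]
  · exact (hlt s h).le

omit h0 hlt in
lemma a_succ (s : ℝ≥0) (j : ℕ) : a χ s (j + 1) = χ (a χ s j) :=
  Function.iterate_succ_apply' χ j s

lemma a_anti (s : ℝ≥0) : Antitone (a χ s) :=
  antitone_nat_of_succ_le fun j => (a_succ (χ := χ) s j) ▸ chi_le h0 hlt _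

lemma a_le_self (s : ℝ≥0) (j : ℕ) : a χ s j ≤ s := by
  simpa [a] using a_anti h0 hlt s (Nat.zero_le j)

omit hlt in
lemma a_zero (j : ℕ) : a χ 0 j = 0 := Function.iterate_fixed h0 j

end

include hmono in
lemma a_mono (j : ℕ) : Monotone (fun s => a χ s j) := by
  intro s t hst
  exact (hmono.monotone.iterate j) hst

include hcont h0 hlt in
lemma a_tendsto (s : ℝ≥0) : Tendsto (a χ s) atTop (nhds 0) := by
  have hb : BddBelow (Set.range (a χ s)) := OrderBot.bddBelow _
  have h1 : Tendsto (a χ s) atTop (nhds (⨅ j, a χ s j)) :=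
    tendsto_atTop_ciInf (a_anti h0 hlt s) hb
  set c := ⨅ j, a χ s j with hc
  have h2 : Tendsto (fun j => a χ s (j + 1)) atTop (nhds c) :=
    h1.comp (tendsto_add_atTop_nat 1)
  have h3 : Tendsto (fun j => χ (a χ s j)) atTop (nhds (χ c)) :=
    (hcont.tendsto c).comp h1
  have hfix : χ c = c := by
    refine tendsto_nhds_unique ?_ h2
    simpa [a_succ (χ := χ)] using h3
  have : c = 0 := by
    by_contra hne
    exact absurd hfix (ne_of_lt (hlt c (pos_iff_ne_zero.2 hne)))
  rwa [this] at h1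


variable (χ) in
/-- difference of consecutive iterates, in ℝ -/
def D (s : ℝ≥0) (j : ℕ) : ℝ := (a χ s j : ℝ) - (a χ s (j + 1) : ℝ)

include h0 hlt

lemma D_nonneg (s : ℝ≥0) (j : ℕ) : 0 ≤ D χ s j :=
  sub_nonneg.2 (by exact_mod_cast a_anti h0 hlt s (Nat.le_succ j))

omit h0 hlt in
lemma sum_D_le (s : ℝ≥0) (N : ℕ) : ∑ j ∈ Finset.range N, D χ s j ≤ (s : ℝ) := by
  have : ∑ j ∈ Finset.range N, D χ s j = (a χ s 0 : ℝ) - (a χ s N : ℝ) :=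
    Finset.sum_range_sub' (fun j => (a χ s j : ℝ)) N
  rw [this]
  have h1 : (0 : ℝ) ≤ (a χ s N : ℝ) := (a χ s N).coe_nonneg
  have h2 : (a χ s 0 : ℝ) = (s : ℝ) := by simp [a]
  linarith

lemma summable_D (s : ℝ≥0) : Summable (D χ s) :=
  summable_of_sum_range_le (D_nonneg h0 hlt s) (sum_D_le s)

lemma summable_Dg (s : ℝ≥0) (u : ℝ) : Summable (fun j => D χ s j * g j u) := by
  refine (summable_D h0 hlt s).of_nonneg_of_le
    (fun j => mul_nonneg (D_nonneg h0 hlt s j) (g_nonneg j u)) (fun j => ?_)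
  calc D χ s j * g j u ≤ D χ s j * 1 :=
        mul_le_mul_of_nonneg_left (g_le_one j u) (D_nonneg h0 hlt s j)
    _ = D χ s j := mul_one _

lemma summable_ah (s : ℝ≥0) (u : ℝ) : Summable (fun j => (a χ s j : ℝ) * h j u) := by
  refine ((summable_h u).mul_left (s : ℝ)).of_nonneg_of_le
    (fun j => mul_nonneg (a χ s j).coe_nonneg (h_nonneg j u)) (fun j => ?_)
  exact mul_le_mul_of_nonneg_right (by exact_mod_cast a_le_self h0 hlt s j) (h_nonneg j u)

omit h0 hlt in
/-- Abel partial sum identity -/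
lemma abel_partial (s : ℝ≥0) (u : ℝ) (N : ℕ) :
    ∑ j ∈ Finset.range (N + 1), (a χ s j : ℝ) * h j u
      = ∑ j ∈ Finset.range N, D χ s j * g j u + (a χ s N : ℝ) * g N u := by
  induction N with
  | zero => simp [h]
  | succ N ih =>
      rw [Finset.sum_range_succ, ih, Finset.sum_range_succ]
      simp only [h, D]
      ring

variable (χ) in
/-- the series part of our KL function -/
def S (s : ℝ≥0) (u : ℝ) : ℝ := ∑' j, (a χ s j : ℝ) * h j u

include hcont in
lemma S_eq_g (s : ℝ≥0) (u : ℝ) : S χ s u = ∑' j, D χ s j * g j u := by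
  have h1 : Tendsto (fun N => ∑ j ∈ Finset.range (N + 1), (a χ s j : ℝ) * h j u)
      atTop (nhds (S χ s u)) :=
    (summable_ah h0 hlt s u).hasSum.tendsto_sum_nat.comp (tendsto_add_atTop_nat 1)
  have h2 : Tendsto (fun N => ∑ j ∈ Finset.range N, D χ s j * g j u)
      atTop (nhds (∑' j, D χ s j * g j u)) :=
    (summable_Dg h0 hlt s u).hasSum.tendsto_sum_nat
  have h3 : Tendsto (fun N => (a χ s N : ℝ) * g N u) atTop (nhds 0) := by
    have hb : ∀ N, (a χ s N : ℝ) * g N u ≤ (a χ s N : ℝ) := fun N => by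
      calc (a χ s N : ℝ) * g N u ≤ (a χ s N : ℝ) * 1 :=
            mul_le_mul_of_nonneg_left (g_le_one N u) (a χ s N).coe_nonneg
        _ = (a χ s N : ℝ) := mul_one _
    exact squeeze_zero (fun N => mul_nonneg (a χ s N).coe_nonneg (g_nonneg N u)) hb
      (NNReal.tendsto_coe.2 (a_tendsto hcont h0 hlt s))
  have h4 := h2.add h3
  rw [add_zero] at h4
  refine tendsto_nhds_unique ?_ h4
  simpa only [abel_partial] using h1

omit h0 hlt in
lemma S_nonneg (s : ℝ≥0) (u : ℝ) : 0 ≤ S χ s u :=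
  tsum_nonneg fun j => mul_nonneg (a χ s j).coe_nonneg (h_nonneg j u)

include hmono in
lemma S_mono (u : ℝ) {s t : ℝ≥0} (hst : s ≤ t) : S χ s u ≤ S χ t u := by
  refine Summable.tsum_le_tsum (fun j => ?_) (summable_ah h0 hlt s u) (summable_ah h0 hlt t u)
  exact mul_le_mul_of_nonneg_right (by exact_mod_cast a_mono hmono j hst) (h_nonneg j u)

omit hlt in
lemma S_zero (u : ℝ) : S χ 0 u = 0 := by
  have : ∀ j, ((a χ 0 j : ℝ)) * h j u = 0 := fun j => by
    rw [a_zero h0]; simp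
  simp only [S, this, tsum_zero]

include hcont in
lemma S_anti (s : ℝ≥0) {u v : ℝ} (huv : u ≤ v) : S χ s v ≤ S χ s u := by
  rw [S_eq_g hcont h0 hlt, S_eq_g hcont h0 hlt]
  refine Summable.tsum_le_tsum (fun j => ?_) (summable_Dg h0 hlt s v) (summable_Dg h0 hlt s u)
  exact mul_le_mul_of_nonneg_left (g_anti j huv) (D_nonneg h0 hlt s j)

include hcont in
lemma S_cont_u (s : ℝ≥0) : Continuous (fun u => S χ s u) := by
  have : (fun u => S χ s u) = fun u => ∑' j, D χ s j * g j u := by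
    funext u; exact S_eq_g hcont h0 hlt s u
  rw [this]
  refine continuous_tsum (fun j => continuous_const.mul (g_cont j)) (summable_D h0 hlt s)
    (fun j u => ?_)
  rw [Real.norm_of_nonneg (mul_nonneg (D_nonneg h0 hlt s j) (g_nonneg j u))]
  calc D χ s j * g j u ≤ D χ s j * 1 :=
        mul_le_mul_of_nonneg_left (g_le_one j u) (D_nonneg h0 hlt s j)
    _ = D χ s j := mul_one _

include hcont in
lemma S_cont_s (u : ℝ) : Continuous (fun s => S χ s u) := by
  rw [continuous_iff_continuousAt]
  intro s₀
  have hR : s₀ < s₀ + 1 := lt_add_of_pos_right _ one_pos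
  have hco : ContinuousOn (fun s => S χ s u) (Set.Iic (s₀ + 1)) := by
    refine continuousOn_tsum (u := fun j => ((s₀ + 1 : ℝ≥0) : ℝ) * h j u)
      (fun j => Continuous.continuousOn ?_) ((summable_h u).mul_left _)
      (fun j s hs => ?_)
    · exact (NNReal.continuous_coe.comp (hcont.iterate j)).mul continuous_const
    · rw [Real.norm_of_nonneg (mul_nonneg (a χ s j).coe_nonneg (h_nonneg j u))]
      refine mul_le_mul_of_nonneg_right ?_ (h_nonneg j u)
      exact_mod_cast le_trans (a_le_self h0 hlt s j) hs
  exact hco.continuousAt (Iic_mem_nhds hR)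

include hcont in
lemma S_tendsto (s : ℝ≥0) : Tendsto (fun u => S χ s u) atTop (nhds 0) := by
  have : (fun u => S χ s u) = fun u => ∑' j, D χ s j * g j u := by
    funext u; exact S_eq_g hcont h0 hlt s u
  rw [this]
  have h0' : (0 : ℝ) = ∑' _ : ℕ, (0 : ℝ) := by simp
  rw [h0']
  refine tendsto_tsum_of_dominated_convergence (summable_D h0 hlt s) (fun j => ?_)
    (Eventually.of_forall fun u j => ?_)
  · simpa using (g_tendsto j).const_mul (D χ s j)
  · rw [Real.norm_of_nonneg (mul_nonneg (D_nonneg h0 hlt s j) (g_nonneg j u))]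
    calc D χ s j * g j u ≤ D χ s j * 1 :=
          mul_le_mul_of_nonneg_left (g_le_one j u) (D_nonneg h0 hlt s j)
      _ = D χ s j := mul_one _

lemma S_lower (s : ℝ≥0) {l : ℕ} {u : ℝ} (hu : u ≤ (l : ℝ) + 1) :
    (a χ s l : ℝ) ≤ S χ s u := by
  have h1 : ∑ j ∈ Finset.range (l + 1), (a χ s l : ℝ) * h j u
      ≤ ∑ j ∈ Finset.range (l + 1), (a χ s j : ℝ) * h j u := by
    refine Finset.sum_le_sum fun j hj => ?_
    refine mul_le_mul_of_nonneg_right ?_ (h_nonneg j u)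
    exact_mod_cast a_anti h0 hlt s (Nat.lt_succ_iff.1 (Finset.mem_range.1 hj))
  have h2 : ∑ j ∈ Finset.range (l + 1), (a χ s l : ℝ) * h j u = (a χ s l : ℝ) := by
    rw [← Finset.mul_sum, sum_h, g_eq_one hu, mul_one]
  have h3 : ∑ j ∈ Finset.range (l + 1), (a χ s j : ℝ) * h j u ≤ S χ s u :=
    Summable.sum_le_tsum _ (fun j _ => mul_nonneg (a χ s j).coe_nonneg (h_nonneg j u))
      (summable_ah h0 hlt s u)
  linarith


variable (χ) in
/-- The candidate KL function, before truncation to ℝ≥0. -/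
def FF (M : ℕ) (s : ℝ≥0) (t : ℝ≥0) : ℝ :=
  (s : ℝ) * Real.exp (-((t : ℝ) / M)) + S χ s ((t : ℝ) / M)

omit h0 hlt in
lemma F_nonneg (M : ℕ) (s t : ℝ≥0) : 0 ≤ FF χ M s t :=
  add_nonneg (mul_nonneg s.coe_nonneg (Real.exp_pos _).le) (S_nonneg s _)

variable (χ) in
/-- The candidate KL function. -/
def beta (M : ℕ) (s t : ℝ≥0) : ℝ≥0 := (FF χ M s t).toNNReal

omit h0 hlt in
lemma coe_beta (M : ℕ) (s t : ℝ≥0) : (beta χ M s t : ℝ) = FF χ M s t :=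
  Real.coe_toNNReal _ (F_nonneg M s t)

omit h0 hlt in
lemma cont_coe_div (M : ℕ) : Continuous (fun t : ℝ≥0 => (t : ℝ) / M) :=
  NNReal.continuous_coe.div_const _

include hcont hmono in
lemma beta_classK (M : ℕ) (t : ℝ≥0) : Continuous (fun s => beta χ M s t) ∧
    StrictMono (fun s => beta χ M s t) ∧ beta χ M 0 t = 0 := by
  refine ⟨?_, ?_, ?_⟩
  · exact continuous_real_toNNReal.comp
      ((NNReal.continuous_coe.mul continuous_const).add (S_cont_s hcont h0 hlt _))
  · intro s s' hss'
    rw [← NNReal.coe_lt_coe, coe_beta, coe_beta]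
    refine add_lt_add_of_lt_of_le ?_ (S_mono hmono h0 hlt _ hss'.le)
    exact mul_lt_mul_of_pos_right (NNReal.coe_lt_coe.2 hss') (Real.exp_pos _)
  · have : FF χ M 0 t = 0 := by simp [FF, S_zero h0]
    simp [beta, this]

include hcont in
lemma beta_classL (M : ℕ) (hM : 1 ≤ M) {s : ℝ≥0} (hs : 0 < s) :
    Continuous (beta χ M s) ∧ StrictAnti (beta χ M s) ∧
    Tendsto (beta χ M s) atTop (nhds 0) := by
  have hMpos : (0 : ℝ) < M := by exact_mod_cast hM
  refine ⟨?_, ?_, ?_⟩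
  · refine continuous_real_toNNReal.comp (Continuous.add ?_ ?_)
    · exact continuous_const.mul
        (Real.continuous_exp.comp (cont_coe_div M).neg)
    · exact (S_cont_u hcont h0 hlt s).comp (cont_coe_div M)
  · intro t t' htt'
    rw [← NNReal.coe_lt_coe, coe_beta, coe_beta]
    have hdiv : (t : ℝ) / M < (t' : ℝ) / M := by
      apply div_lt_div_of_pos_right ?_ hMpos
      exact_mod_cast htt'
    refine add_lt_add_of_lt_of_le ?_ (S_anti hcont h0 hlt s hdiv.le)
    exact mul_lt_mul_of_pos_left (Real.exp_lt_exp.2 (neg_lt_neg hdiv))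
      (by exact_mod_cast hs)
  · have hcoe : Tendsto (fun t : ℝ≥0 => (t : ℝ) / M) atTop atTop := by
      apply Tendsto.atTop_div_const hMpos
      exact NNReal.tendsto_coe_atTop.2 tendsto_id
    have hF : Tendsto (fun t => FF χ M s t) atTop (nhds 0) := by
      have h1 : Tendsto (fun t : ℝ≥0 => (s : ℝ) * Real.exp (-((t : ℝ) / M)))
          atTop (nhds 0) := by
        have := Real.tendsto_exp_atBot.comp
          ((tendsto_neg_atTop_atBot).comp hcoe)
        simpa using this.const_mul (s : ℝ)
      have h2 : Tendsto (fun t : ℝ≥0 => S χ s ((t : ℝ) / M)) atTop (nhds 0) :=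
        (S_tendsto hcont h0 hlt s).comp hcoe
      simpa [FF] using h1.add h2
    have := (continuous_real_toNNReal.tendsto 0).comp hF
    rw [Real.toNNReal_zero] at this
    exact this

include hcont in
omit hcont in
lemma beta_bound (M : ℕ) (hM : 1 ≤ M) (s : ℝ≥0) (l k₀ : ℕ) (hk₀ : k₀ < M) :
    χ^[l] s ≤ beta χ M s ((l * M + k₀ : ℕ) : ℝ≥0) := by
  have hMpos : (0 : ℝ) < M := by exact_mod_cast hM
  set t : ℝ≥0 := ((l * M + k₀ : ℕ) : ℝ≥0) with ht
  have hu : (t : ℝ) / M ≤ (l : ℝ) + 1 := by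
    rw [div_le_iff₀ hMpos]
    have h1 : (k₀ : ℝ) < M := by exact_mod_cast hk₀
    have h2 : (t : ℝ) = (l : ℝ) * M + k₀ := by
      rw [ht]; push_cast; ring
    rw [h2]; nlinarith [Nat.cast_nonneg (α := ℝ) l]
  have hS : (a χ s l : ℝ) ≤ S χ s ((t : ℝ) / M) := S_lower h0 hlt s hu
  have hF : (a χ s l : ℝ) ≤ FF χ M s t := by
    have := mul_nonneg s.coe_nonneg (Real.exp_pos (-((t : ℝ) / M))).le
    unfold FF; linarith
  calc χ^[l] s = ((a χ s l : ℝ)).toNNReal := by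
        rw [Real.toNNReal_coe]; rfl
    _ ≤ beta χ M s t := Real.toNNReal_mono hF

end
end CmpAux

end CmpAuxSection

/-- Comparison lemma for finite-step dynamics. -/
theorem comparison_lemma_finite_step
    (M : ℕ) (hM : 1 ≤ M) (L : ℕ∞) (k₀ : ℕ) (hk₀ : k₀ < M)
    (χ : ℝ≥0 → ℝ≥0) (hχ : ClassKInf χ) (hχlt : ∀ s : ℝ≥0, 0 < s → χ s < s)
    (y : ℕ → ℝ≥0)
    (hy : ∀ l : ℕ, (l : ℕ∞) ≤ L → y ((l + 1) * M + k₀) ≤ χ (y (l * M + k₀))) :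
    (∃ β : ℝ≥0 → ℝ≥0 → ℝ≥0, ClassKL β ∧
      ∀ l : ℕ, (l : ℕ∞) ≤ L →
        y (l * M + k₀) ≤ β (y k₀) ((l * M + k₀ : ℕ) : ℝ≥0)) ∧
    ((∀ k₀' : ℕ, k₀' < M → ∀ l : ℕ, (l : ℕ∞) ≤ L →
        y ((l + 1) * M + k₀') ≤ χ (y (l * M + k₀'))) →
      ∃ β : ℝ≥0 → ℝ≥0 → ℝ≥0, ClassKL β ∧
        ∀ k : ℕ, (k : ℕ∞) < (L + 1) * (M : ℕ∞) →
          y k ≤ β ((Finset.range M).sup y) (k : ℝ≥0)) := by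
  
  obtain ⟨⟨hcont, hmono, h0⟩, -⟩ := hχ
  have hMpos : 0 < M := hM
  have iter : ∀ k₀' : ℕ,
      (∀ l : ℕ, (l : ℕ∞) ≤ L → y ((l + 1) * M + k₀') ≤ χ (y (l * M + k₀'))) →
      ∀ l : ℕ, (l : ℕ∞) ≤ L → y (l * M + k₀') ≤ χ^[l] (y k₀') := by
    intro k₀' hy' l hl
    induction l with
    | zero => simp
    | succ l ih =>
        have hl' : (l : ℕ∞) ≤ L :=
          le_trans (by exact_mod_cast Nat.cast_le.2 (Nat.le_succ l)) hl
        calc y ((l + 1) * M + k₀') ≤ χ (y (l * M + k₀')) := hy' l hl'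
          _ ≤ χ (χ^[l] (y k₀')) := hmono.monotone (ih hl')
          _ = χ^[l + 1] (y k₀') := (Function.iterate_succ_apply' χ l _).symm
  have hKL : ClassKL (CmpAux.beta χ M) := by
    constructor
    · intro t
      exact CmpAux.beta_classK hcont hmono h0 hχlt M t
    · intro s hs
      exact CmpAux.beta_classL hcont h0 hχlt M hM hs
  constructor
  · refine ⟨CmpAux.beta χ M, hKL, fun l hl => ?_⟩
    exact le_trans (iter k₀ hy l hl) (CmpAux.beta_bound h0 hχlt M hM (y k₀) l k₀ hk₀)
  · intro hyall
    refine ⟨CmpAux.beta χ M, hKL, fun k hk => ?_⟩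
    set l := k / M with hldef
    set r := k % M with hrdef
    have hrM : r < M := Nat.mod_lt k hMpos
    have hkeq : l * M + r = k := by rw [mul_comm]; exact Nat.div_add_mod k M
    have hlL : (l : ℕ∞) ≤ L := by
      cases L with
      | top => exact le_top
      | coe n =>
          have hcast : ((n : ℕ∞) + 1) * (M : ℕ∞) = (((n + 1) * M : ℕ) : ℕ∞) := by
            push_cast; ring
          rw [hcast] at hk
          have hkn : k < (n + 1) * M := by exact_mod_cast hk
          have : l < n + 1 := (Nat.div_lt_iff_lt_mul hMpos).2 hkn
          exact_mod_cast Nat.cast_le.2 (Nat.lt_succ_iff.1 this)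
    have h1 : y k ≤ χ^[l] (y r) := by
      have := iter r (hyall r hrM) l hlL
      rwa [hkeq] at this
    have h2 : χ^[l] (y r) ≤ χ^[l] ((Finset.range M).sup y) :=
      hmono.monotone.iterate l (Finset.le_sup (Finset.mem_range.2 hrM))
    have h3 := CmpAux.beta_bound h0 hχlt M hM ((Finset.range M).sup y) l r hrM
    rw [hkeq] at h3
    exact le_trans h1 (le_trans h2 h3)
end

section
/- (Cycle characterization of the small-gain condition.) The map Γ⊕ satisfies the small-gain condition if and only if all cycles in the corresponding gain graph are weakly contracting, i.e., for every r ≥ 1 and all pairwise distinct indices i₁,…,i_r ∈ {1,…,N}, the composition γ_{i₁i₂} ∘ γ_{i₂i₃} ∘ … ∘ γ_{i_{r−1}i_r} ∘ γ_{i_r i₁} satisfies (γ_{i₁i₂} ∘ … ∘ γ_{i_r i₁})(s) < s for all s > 0 (where a composition involving an identically zero factor is identically zero, so the condition is trivially satisfied for such cycles). -/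
open scoped NNReal

variable {E F : Type*} [NormedAddCommGroup E] [NormedAddCommGroup F]

/-- The composition γ_{c 0, c 1} ∘ γ_{c 1, c 2} ∘ … ∘ γ_{c (r-1), c 0} along the
cycle c 0 → c 1 → … → c (r-1) → c 0. -/
def cycComp {N : ℕ} (γ : Fin N → Fin N → ℝ≥0 → ℝ≥0) {r : ℕ} (hr : 0 < r)
    (c : Fin r → Fin N) : ℝ≥0 → ℝ≥0 :=
  (List.ofFn fun j : Fin r =>
    γ (c j) (c ⟨(j.1 + 1) % r, Nat.mod_lt _ hr⟩)).foldr (· ∘ ·) id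

def tComp {N r : ℕ} (γ : Fin N → Fin N → ℝ≥0 → ℝ≥0) (hr : 0 < r)
    (c : Fin r → Fin N) (j : ℕ) : ℝ≥0 → ℝ≥0 :=
  ((List.ofFn fun j : Fin r =>
    γ (c j) (c ⟨(j.1 + 1) % r, Nat.mod_lt _ hr⟩)).drop j).foldr (· ∘ ·) id

lemma tComp_zero {N r : ℕ} (γ : Fin N → Fin N → ℝ≥0 → ℝ≥0) (hr : 0 < r)
    (c : Fin r → Fin N) : tComp γ hr c 0 = cycComp γ hr c := rfl

lemma tComp_top {N r : ℕ} (γ : Fin N → Fin N → ℝ≥0 → ℝ≥0) (hr : 0 < r)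
    (c : Fin r → Fin N) : tComp γ hr c r = id := by
  unfold tComp
  rw [List.drop_eq_nil_of_le (by simp)]
  rfl

lemma tComp_succ {N r : ℕ} (γ : Fin N → Fin N → ℝ≥0 → ℝ≥0) (hr : 0 < r)
    (c : Fin r → Fin N) {j : ℕ} (hj : j < r) :
    tComp γ hr c j =
      γ (c ⟨j, hj⟩) (c ⟨(j + 1) % r, Nat.mod_lt _ hr⟩) ∘ tComp γ hr c (j + 1) := by
  unfold tComp
  rw [List.drop_eq_getElem_cons (by simpa using hj), List.foldr_cons]
  simp

lemma foldr_mono (l : List (ℝ≥0 → ℝ≥0)) (h : ∀ f ∈ l, Monotone f) :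
    Monotone (l.foldr (· ∘ ·) id) := by
  induction l with
  | nil => exact monotone_id
  | cons a l ih =>
    exact (h a (by simp)).comp (ih fun f hf => h f (by simp [hf]))

/-- Cycle characterization of the small-gain condition: Γ⊕
satisfies the small-gain condition iff all cycles of the gain graph are weakly
contracting. -/
theorem small_gain_iff_cycles_contracting
    {N : ℕ} (hN : 0 < N) (γ : Fin N → Fin N → ℝ≥0 → ℝ≥0)
    (hγ : ∀ i j, ClassKInf (γ i j) ∨ γ i j = fun _ => 0) :
    (∀ s : Fin N → ℝ≥0, s ≠ 0 →
        ∃ i, (Finset.univ.sup fun j => γ i j (s j)) < s i) ↔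
    (∀ (r : ℕ) (hr : 0 < r) (c : Fin r → Fin N), Function.Injective c →
        ∀ t : ℝ≥0, 0 < t → cycComp γ hr c t < t) := by
  have gmono : ∀ i j, Monotone (γ i j) := by
    intro i j
    rcases hγ i j with hK | hz
    · exact hK.1.2.1.monotone
    · rw [hz]; exact monotone_const
  have gzero : ∀ i j, γ i j 0 = 0 := by
    intro i j
    rcases hγ i j with hK | hz
    · exact hK.1.2.2
    · rw [hz]
  have tmono : ∀ {r : ℕ} (hr : 0 < r) (c : Fin r → Fin N) (j : ℕ),
      Monotone (tComp γ hr c j) := by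
    intro r hr c j
    apply foldr_mono
    intro f hf
    have hf' : f ∈ List.ofFn fun j : Fin r =>
        γ (c j) (c ⟨(j.1 + 1) % r, Nat.mod_lt _ hr⟩) := List.mem_of_mem_drop hf
    rw [List.mem_ofFn] at hf'
    obtain ⟨k, hk⟩ := hf'
    rw [← hk]
    exact gmono _ _
  constructor
  · -- small gain → cycles contracting
    intro hSG r hr c hc t ht
    by_contra hcon
    push_neg at hcon
    -- hcon : t ≤ cycComp γ hr c t
    have hpos : ∀ j ≤ r, 0 < tComp γ hr c j t := by
      intro j hj
      induction j with
      | zero => rw [tComp_zero]; exact lt_of_lt_of_le ht hcon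
      | succ j ih =>
        have hjr : j < r := hj
        have h0 : 0 < tComp γ hr c j t := ih (le_of_lt hjr)
        rw [tComp_succ γ hr c hjr] at h0
        by_contra h1
        push_neg at h1
        have h2 : tComp γ hr c (j + 1) t = 0 := le_antisymm h1 zero_le
        simp only [Function.comp_apply, h2, gzero] at h0
        exact absurd h0 (lt_irrefl 0)
    set s : Fin N → ℝ≥0 := fun i =>
      if h : ∃ j : Fin r, c j = i then tComp γ hr c h.choose.1 t else 0 with hs
    have hs_c : ∀ j : Fin r, s (c j) = tComp γ hr c j.1 t := by
      intro j
      have hex : ∃ j' : Fin r, c j' = c j := ⟨j, rfl⟩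
      simp only [hs, dif_pos hex]
      rw [hc hex.choose_spec]
    have hsne : s ≠ 0 := by
      intro h0
      have := hs_c ⟨0, hr⟩
      rw [h0] at this
      exact absurd (this ▸ hpos 0 (Nat.zero_le r)) (by simp [← this])
    obtain ⟨i, hi⟩ := hSG s hsne
    by_cases hex : ∃ j : Fin r, c j = i
    · obtain ⟨j, rfl⟩ := hex
      have key : s (c j) ≤ γ (c j) (c ⟨(j.1 + 1) % r, Nat.mod_lt _ hr⟩)
          (s (c ⟨(j.1 + 1) % r, Nat.mod_lt _ hr⟩)) := by
        rw [hs_c, hs_c]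
        by_cases hlt : j.1 + 1 < r
        · rw [show ((⟨(j.1 + 1) % r, Nat.mod_lt _ hr⟩ : Fin r) : ℕ) = j.1 + 1 from
            Nat.mod_eq_of_lt hlt]
          rw [tComp_succ γ hr c j.2]
          simp only [Function.comp_apply, Fin.eta]
          exact le_rfl
        · have hj1 : j.1 + 1 = r := Nat.le_antisymm j.2 (not_lt.mp hlt)
          have hm0 : (j.1 + 1) % r = 0 := by rw [hj1]; exact Nat.mod_self r
          simp only [hm0]
          rw [tComp_succ γ hr c j.2]
          simp only [Function.comp_apply, Fin.eta, hm0]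
          have h1 : tComp γ hr c (j.1 + 1) t = t := by rw [hj1, tComp_top]; rfl
          rw [h1]
          exact gmono _ _ (hcon.trans_eq (tComp_zero γ hr c ▸ rfl))
      have hle : s (c j) ≤ Finset.univ.sup fun k => γ (c j) k (s k) :=
        key.trans (Finset.le_sup (f := fun k => γ (c j) k (s k)) (Finset.mem_univ _))
      exact absurd hi (not_lt.mpr hle)
    · have : s i = 0 := by simp only [hs, dif_neg hex]
      rw [this] at hi
      exact absurd hi (by simp)
  · -- cycles contracting → small gain
    intro hC s hsne
    by_contra hno
    push_neg at hno
    have hstep : ∀ i : Fin N, 0 < s i → ∃ j : Fin N, 0 < s j ∧ s i ≤ γ i j (s j) := by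
      intro i hi
      obtain ⟨j, -, hj⟩ := Finset.exists_mem_eq_sup Finset.univ
        ⟨⟨0, hN⟩, Finset.mem_univ _⟩ (fun k => γ i k (s k))
      have hle : s i ≤ γ i j (s j) := hj ▸ hno i
      refine ⟨j, ?_, hle⟩
      by_contra h0
      push_neg at h0
      have hsj : s j = 0 := le_antisymm h0 zero_le
      rw [hsj, gzero] at hle
      exact absurd (le_antisymm hle zero_le) hi.ne'
    have hchoice : ∀ x : {i : Fin N // 0 < s i},
        ∃ y : {i : Fin N // 0 < s i}, s x.1 ≤ γ x.1 y.1 (s y.1) := by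
      intro x
      obtain ⟨j, hj, hle⟩ := hstep x.1 x.2
      exact ⟨⟨j, hj⟩, hle⟩
    choose σ hσ using hchoice
    obtain ⟨i₀, hi₀⟩ : ∃ i, s i ≠ 0 := Function.ne_iff.mp hsne
    set x₀ : {i : Fin N // 0 < s i} := ⟨i₀, lt_of_le_of_ne zero_le (Ne.symm hi₀)⟩
    obtain ⟨a, b, hab, heq⟩ := Finite.exists_ne_map_eq_of_infinite (fun k : ℕ => σ^[k] x₀)
    have hper : ∃ (y : {i : Fin N // 0 < s i}) (p : ℕ), 0 < p ∧ Function.IsPeriodicPt σ p y := by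
      rcases hab.lt_or_gt with h | h
      · refine ⟨σ^[a] x₀, b - a, by omega, ?_⟩
        show σ^[b - a] (σ^[a] x₀) = σ^[a] x₀
        rw [← Function.iterate_add_apply, show b - a + a = b by omega]
        exact heq.symm
      · refine ⟨σ^[b] x₀, a - b, by omega, ?_⟩
        show σ^[a - b] (σ^[b] x₀) = σ^[b] x₀
        rw [← Function.iterate_add_apply, show a - b + b = a by omega]
        exact heq
    obtain ⟨y, p, hp, hyp⟩ := hper
    set m := Function.minimalPeriod σ y with hmdef
    have hm : 0 < m := hyp.minimalPeriod_pos hp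
    have hmin : σ^[m] y = y := Function.isPeriodicPt_minimalPeriod σ y
    set c : Fin m → Fin N := fun k => (σ^[k.1] y).1 with hcdef
    have hcinj : Function.Injective c := by
      intro k k' h
      have h2 : σ^[k.1] y = σ^[k'.1] y := Subtype.ext h
      exact Fin.ext (Function.iterate_injOn_Iio_minimalPeriod k.2 k'.2 h2)
    have key : ∀ d ≤ m, s ((σ^[m - d] y).1) ≤ tComp γ hm c (m - d) (s y.1) := by
      intro d
      induction d with
      | zero =>
        intro _
        rw [Nat.sub_zero, tComp_top, hmin]
        exact le_refl _
      | succ d ih =>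
        intro hd
        have hdm : d ≤ m := Nat.le_of_succ_le hd
        have hj : m - (d + 1) < m := by omega
        have hj1 : m - (d + 1) + 1 = m - d := by omega
        have hσit : σ (σ^[m - (d + 1)] y) = σ^[m - d] y := by
          have h := (Function.iterate_succ_apply' σ (m - (d + 1)) y).symm
          rw [Nat.succ_eq_add_one, hj1] at h
          exact h
        have hc2 : c ⟨(m - (d + 1) + 1) % m, Nat.mod_lt _ hm⟩ = (σ^[m - d] y).1 := by
          simp only [hcdef]
          rw [hj1]
          by_cases h : m - d < m
          · rw [Nat.mod_eq_of_lt h]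
          · have h1 : m - d = m := by omega
            rw [h1, Nat.mod_self]
            simp [hmin]
        rw [tComp_succ γ hm c hj]
        calc s ((σ^[m - (d + 1)] y).1)
            ≤ γ ((σ^[m - (d + 1)] y).1) ((σ (σ^[m - (d + 1)] y)).1)
              (s ((σ (σ^[m - (d + 1)] y)).1)) := hσ _
          _ = γ (c ⟨m - (d + 1), hj⟩) (c ⟨(m - (d + 1) + 1) % m, Nat.mod_lt _ hm⟩)
              (s ((σ^[m - d] y).1)) := by rw [hσit, hc2]
          _ ≤ γ (c ⟨m - (d + 1), hj⟩) (c ⟨(m - (d + 1) + 1) % m, Nat.mod_lt _ hm⟩)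
              (tComp γ hm c (m - (d + 1) + 1) (s y.1)) := by
                apply gmono
                rw [hj1]
                exact ih hdm
          _ = (γ (c ⟨m - (d + 1), hj⟩) (c ⟨(m - (d + 1) + 1) % m, Nat.mod_lt _ hm⟩) ∘
              tComp γ hm c (m - (d + 1) + 1)) (s y.1) := rfl
    have hfinal := key m (le_refl m)
    rw [Nat.sub_self, Function.iterate_zero_apply, tComp_zero] at hfinal
    exact absurd (hC m hm c hcinj (s y.1) y.2) (not_lt.mpr hfinal)
end

section
/- (Equivalence of the two dissipative decrease formulations.) Let G : ℝⁿ × ℝᵐ → ℝⁿ and let W : ℝⁿ → [0,∞) be proper and positive definite with bounds α₁, α₂ of class K∞. Then the following are equivalent: (a) there exist α₃ of class K∞ and σ of class K such that W(G(ξ,μ)) − W(ξ) ≤ −α₃(‖ξ‖) + σ(‖μ‖) for all ξ ∈ ℝⁿ, μ ∈ ℝᵐ; (b) there exist a positive definite ρ with id − ρ of class K∞ and σ of class K such that W(G(ξ,μ)) ≤ ρ(W(ξ)) + σ(‖μ‖) for all ξ ∈ ℝⁿ, μ ∈ ℝᵐ. -/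
open scoped NNReal

variable {E F : Type*} [NormedAddCommGroup E] [NormedAddCommGroup F]

lemma classKInf_comp {f g : ℝ≥0 → ℝ≥0} (hf : ClassKInf f) (hg : ClassKInf g) :
    ClassKInf (fun s => f (g s)) := by
  obtain ⟨⟨fc, fm, f0⟩, ft⟩ := hf
  obtain ⟨⟨gc, gm, g0⟩, gt⟩ := hg
  exact ⟨⟨fc.comp gc, fm.comp gm, by simp [g0, f0]⟩, ft.comp gt⟩

lemma classKInf_surj {f : ℝ≥0 → ℝ≥0} (hf : ClassKInf f) : Function.Surjective f := by
  obtain ⟨⟨fc, fm, f0⟩, ft⟩ := hf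
  intro y
  obtain ⟨s, hs⟩ := (Filter.tendsto_atTop.1 ft y).exists
  have := intermediate_value_Icc (zero_le : 0 ≤ s) fc.continuousOn
  have hy : y ∈ Set.Icc (f 0) (f s) := ⟨by simp [f0], hs⟩
  obtain ⟨x, _, hx⟩ := this hy
  exact ⟨x, hx⟩

noncomputable def kinv {f : ℝ≥0 → ℝ≥0} (hf : ClassKInf f) : ℝ≥0 ≃o ℝ≥0 :=
  StrictMono.orderIsoOfSurjective f hf.1.2.1 (classKInf_surj hf)

lemma kinv_apply {f : ℝ≥0 → ℝ≥0} (hf : ClassKInf f) (x : ℝ≥0) : kinv hf x = f x := rfl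

lemma kinv_symm_classKInf {f : ℝ≥0 → ℝ≥0} (hf : ClassKInf f) :
    ClassKInf (fun s => (kinv hf).symm s) := by
  constructor
  · refine ⟨(kinv hf).symm.toHomeomorph.continuous, (kinv hf).symm.strictMono, ?_⟩
    have : (kinv hf).symm (kinv hf 0) = 0 := (kinv hf).symm_apply_apply 0
    rwa [kinv_apply, hf.1.2.2] at this
  · refine Filter.tendsto_atTop_atTop.2 fun b => ⟨kinv hf b, fun a ha => ?_⟩
    have := (kinv hf).symm.monotone ha
    rwa [(kinv hf).symm_apply_apply] at this

lemma half_classKInf : ClassKInf (fun s : ℝ≥0 => s / 2) := by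
  constructor
  · refine ⟨continuous_id.div_const 2, fun a b h => ?_, by simp⟩
    · exact div_lt_div_of_pos_right h two_pos
  · refine Filter.tendsto_atTop.2 fun b => (Filter.eventually_ge_atTop (b * 2)).mono fun s hs => ?_
    exact (le_div_iff₀ two_pos).2 hs

lemma min_classKInf {f g : ℝ≥0 → ℝ≥0} (hf : ClassKInf f) (hg : ClassKInf g) :
    ClassKInf (fun s => min (f s) (g s)) := by
  obtain ⟨⟨fc, fm, f0⟩, ft⟩ := hf
  obtain ⟨⟨gc, gm, g0⟩, gt⟩ := hg
  constructor
  · refine ⟨fc.min gc, fun a b h => ?_, by simp [f0, g0]⟩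
    exact lt_min ((min_le_left _ _).trans_lt (fm h)) ((min_le_right _ _).trans_lt (gm h))
  · refine Filter.tendsto_atTop.2 fun b => ?_
    filter_upwards [Filter.tendsto_atTop.1 ft b, Filter.tendsto_atTop.1 gt b] with s h1 h2
    exact le_min h1 h2


/-- Equivalence of the two dissipative decrease formulations for a
proper and positive definite W. The inequality
W(G(ξ,μ)) − W(ξ) ≤ −α₃(‖ξ‖) + σ(‖μ‖) is stated additively as
W(G(ξ,μ)) + α₃(‖ξ‖) ≤ W(ξ) + σ(‖μ‖) in ℝ≥0. -/
theorem dissipative_formulations_equiv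
    {E F : Type*} [NormedAddCommGroup E] [NormedSpace ℝ E] [FiniteDimensional ℝ E]
    [NormedAddCommGroup F] [NormedSpace ℝ F] [FiniteDimensional ℝ F]
    (G : E → F → E) (W : E → ℝ≥0)
    (α₁ α₂ : ℝ≥0 → ℝ≥0) (hα₁ : ClassKInf α₁) (hα₂ : ClassKInf α₂)
    (hW : ∀ ξ, α₁ ‖ξ‖₊ ≤ W ξ ∧ W ξ ≤ α₂ ‖ξ‖₊) :
    (∃ (α₃ σ : ℝ≥0 → ℝ≥0), ClassKInf α₃ ∧ ClassK σ ∧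
      ∀ ξ μ, W (G ξ μ) + α₃ ‖ξ‖₊ ≤ W ξ + σ ‖μ‖₊) ↔
    (∃ (ρ σ : ℝ≥0 → ℝ≥0), PosDefFun ρ ∧ ClassKInf (fun s => s - ρ s) ∧ ClassK σ ∧
      ∀ ξ μ, W (G ξ μ) ≤ ρ (W ξ) + σ ‖μ‖₊) := by
  constructor
  · rintro ⟨α₃, σ, hα₃, hσ, h⟩
    set β := fun s => (kinv hα₂).symm s with hβ
    have hβK : ClassKInf β := kinv_symm_classKInf hα₂
    set χ := fun s => min (α₃ (β s)) (s / 2) with hχ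
    have hχK : ClassKInf χ := min_classKInf (classKInf_comp hα₃ hβK) half_classKInf
    have hχle : ∀ s, χ s ≤ s := fun s =>
      (min_le_right _ _).trans (NNReal.half_le_self s)
    refine ⟨fun s => s - χ s, σ, ⟨?_, by simp [hχK.1.2.2], fun s hs => ?_⟩, ?_, hσ, ?_⟩
    · exact continuous_id.sub hχK.1.1
    · exact tsub_pos_of_lt ((min_le_right _ _).trans_lt (NNReal.half_lt_self hs.ne'))
    · have : (fun s => s - (s - χ s)) = χ := funext fun s => tsub_tsub_cancel_of_le (hχle s)
      rw [this]; exact hχK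
    · intro ξ μ
      have h1 : χ (W ξ) ≤ α₃ ‖ξ‖₊ := by
        refine (min_le_left _ _).trans (hα₃.1.2.1.monotone ?_)
        have : β (W ξ) ≤ β (α₂ ‖ξ‖₊) := hβK.1.2.1.monotone (hW ξ).2
        simpa [hβ, show α₂ ‖ξ‖₊ = kinv hα₂ ‖ξ‖₊ from rfl] using this
      have h2 : W (G ξ μ) + χ (W ξ) ≤ W ξ + σ ‖μ‖₊ :=
        (add_le_add_right h1 _).trans (h ξ μ)
      have h3 : (W ξ - χ (W ξ)) + σ ‖μ‖₊ = (W ξ + σ ‖μ‖₊) - χ (W ξ) :=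
        tsub_add_eq_add_tsub (hχle _)
      rw [h3]
      exact (le_tsub_iff_right ((hχle _).trans le_self_add)).2 h2
  · rintro ⟨ρ, σ, hρ, hχK, hσ, h⟩
    obtain ⟨hρc, hρ0, hρpos⟩ := hρ
    set χ := fun s => s - ρ s with hχ
    have hρle : ∀ s, ρ s ≤ s := by
      intro s
      rcases eq_or_lt_of_le (zero_le : 0 ≤ s) with rfl | hs
      · simp [hρ0]
      · by_contra hc
        have h0 : χ s = 0 := tsub_eq_zero_of_le (le_of_not_ge hc)
        have hpos : 0 < χ s := by
          have := hχK.1.2.1 hs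
          simpa [hχ, hρ0] using this
        exact absurd h0 hpos.ne'
    refine ⟨fun s => χ (α₁ s), σ, classKInf_comp hχK hα₁, hσ, fun ξ μ => ?_⟩
    have h1 : χ (α₁ ‖ξ‖₊) ≤ χ (W ξ) := hχK.1.2.1.monotone (hW ξ).1
    calc W (G ξ μ) + χ (α₁ ‖ξ‖₊) ≤ (ρ (W ξ) + σ ‖μ‖₊) + χ (W ξ) :=
          add_le_add (h ξ μ) h1
      _ = (ρ (W ξ) + χ (W ξ)) + σ ‖μ‖₊ := by ring
      _ = W ξ + σ ‖μ‖₊ := by rw [hχ, add_tsub_cancel_of_le (hρle _)]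
end

section
/- (Invariance of the strong small-gain condition under factorization of the diagonal operator.) Let Γ⊕ be a gain operator and for each i ∈ {1,…,N} let δᵢ₁, δᵢ₂ be of class K∞ and set (id + δᵢ) := (id + δᵢ₂) ∘ (id + δᵢ₁). Define the diagonal operators D, D_I, D_II : [0,∞)^N → [0,∞)^N by [D(s)]ᵢ = (id + δᵢ)([s]ᵢ), [D_I(s)]ᵢ = (id + δᵢ₁)([s]ᵢ), [D_II(s)]ᵢ = (id + δᵢ₂)([s]ᵢ). Then the following are equivalent: for every s ∈ [0,∞)^N with s ≠ 0 there exists i with [(D ∘ Γ⊕)(s)]ᵢ < [s]ᵢ, if and only if for every s ∈ [0,∞)^N with s ≠ 0 there exists i with [(D_I ∘ Γ⊕ ∘ D_II)(s)]ᵢ < [s]ᵢ. -/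
open scoped NNReal

variable {E F : Type*} [NormedAddCommGroup E] [NormedAddCommGroup F]

/-- The gain operator Γ⊕ in maximization form: [Γ⊕(s)]ᵢ = max_j γᵢⱼ([s]ⱼ). -/
noncomputable def gainOp {N : ℕ} (γ : Fin N → Fin N → ℝ≥0 → ℝ≥0)
    (s : Fin N → ℝ≥0) (i : Fin N) : ℝ≥0 :=
  Finset.univ.sup fun j => γ i j (s j)


lemma classKInf_add_surj {δ : ℝ≥0 → ℝ≥0} (hδ : ClassKInf δ) :
    Function.Surjective (fun x => x + δ x) := by
  intro y
  obtain ⟨⟨hc, hm, h0⟩, _⟩ := hδ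
  have hcont : ContinuousOn (fun x : ℝ≥0 => x + δ x) (Set.Icc 0 y) :=
    (continuous_id.add hc).continuousOn
  have hy : y ∈ Set.Icc ((fun x : ℝ≥0 => x + δ x) 0) ((fun x : ℝ≥0 => x + δ x) y) := by
    simp [h0, le_self_add]
  obtain ⟨x, _, hx⟩ := intermediate_value_Icc (zero_le : (0 : ℝ≥0) ≤ y) hcont hy
  exact ⟨x, hx⟩

/-- Invariance of the strong small-gain condition under the
factorization D = D_II ∘ D_I of the diagonal operator, where
id + δᵢ = (id + δᵢ₂) ∘ (id + δᵢ₁). -/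
theorem strong_small_gain_factorization
    {N : ℕ} (hN : 0 < N) (γ : Fin N → Fin N → ℝ≥0 → ℝ≥0)
    (hγ : ∀ i j, ClassKInf (γ i j) ∨ γ i j = fun _ => 0)
    (δ₁ δ₂ : Fin N → ℝ≥0 → ℝ≥0)
    (hδ₁ : ∀ i, ClassKInf (δ₁ i)) (hδ₂ : ∀ i, ClassKInf (δ₂ i)) :
    (∀ s : Fin N → ℝ≥0, s ≠ 0 → ∃ i,
        (gainOp γ s i + δ₁ i (gainOp γ s i)) +
          δ₂ i (gainOp γ s i + δ₁ i (gainOp γ s i)) < s i) ↔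
    (∀ s : Fin N → ℝ≥0, s ≠ 0 → ∃ i,
        gainOp γ (fun j => s j + δ₂ j (s j)) i +
          δ₁ i (gainOp γ (fun j => s j + δ₂ j (s j)) i) < s i) := by
  have gmono : ∀ i, StrictMono (fun x : ℝ≥0 => x + δ₂ i x) :=
    fun i => strictMono_id.add (hδ₂ i).1.2.1
  constructor
  · intro h s hs
    have ht : (fun j => s j + δ₂ j (s j)) ≠ 0 := by
      intro h0
      apply hs
      funext j
      have h1 := congrFun h0 j
      simp only [Pi.zero_apply, add_eq_zero] at h1
      simpa using h1.1
    obtain ⟨i, hi⟩ := h _ ht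
    exact ⟨i, (gmono i).lt_iff_lt.mp hi⟩
  · intro h s hs
    choose t ht using fun j => classKInf_add_surj (hδ₂ j) (s j)
    have hts : (fun j => t j + δ₂ j (t j)) = s := funext ht
    have htne : t ≠ 0 := by
      intro h0
      apply hs
      funext j
      have h1 := ht j
      rw [congrFun h0 j] at h1
      simpa [(hδ₂ j).1.2.2] using h1.symm
    obtain ⟨i, hi⟩ := h t htne
    rw [hts] at hi
    have h2 := (gmono i) hi
    simp only at h2
    rw [show t i + δ₂ i (t i) = s i from ht i] at h2
    exact ⟨i, h2⟩
end

section
/- (Transformation of Ω-paths under factorization of the diagonal operator.) Let Γ⊕ be a gain operator, let δᵢ₁, δᵢ₂ be of class K∞ with (id + δᵢ) := (id + δᵢ₂) ∘ (id + δᵢ₁), and let D, D_I, D_II be the corresponding diagonal operators. Let σ̃₁,…,σ̃_N be functions of class K∞ and set σ̂ᵢ := (id + δᵢ₂)⁻¹ ∘ σ̃ᵢ. Then each σ̂ᵢ is of class K∞, and σ̃ = (σ̃₁,…,σ̃_N) satisfies (D ∘ Γ⊕)(σ̃(r)) < σ̃(r) componentwise for all r > 0 if and only if σ̂ = (σ̂₁,…,σ̂_N)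 satisfies (D_I ∘ Γ⊕ ∘ D_II)(σ̂(r)) < σ̂(r) componentwise for all r > 0; that is, σ̃ is an Ω-path with respect to D ∘ Γ⊕ if and only if D_II⁻¹ ∘ σ̃ is an Ω-path with respect to D_I ∘ Γ⊕ ∘ D_II. -/
open scoped NNReal

variable {E F : Type*} [NormedAddCommGroup E] [NormedAddCommGroup F]

/-- Transformation of Ω-paths under the factorization
id + δᵢ = (id + δᵢ₂) ∘ (id + δᵢ₁) of the diagonal operator: each
σ̂ᵢ = (id + δᵢ₂)⁻¹ ∘ σ̃ᵢ is of class K∞, and σ̃ is an Ω-path for D ∘ Γ⊕ iff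
σ̂ = D_II⁻¹ ∘ σ̃ is an Ω-path for D_I ∘ Γ⊕ ∘ D_II. -/
theorem omega_path_factorization
    {N : ℕ} (hN : 0 < N) (γ : Fin N → Fin N → ℝ≥0 → ℝ≥0)
    (hγ : ∀ i j, ClassKInf (γ i j) ∨ γ i j = fun _ => 0)
    (δ₁ δ₂ : Fin N → ℝ≥0 → ℝ≥0)
    (hδ₁ : ∀ i, ClassKInf (δ₁ i)) (hδ₂ : ∀ i, ClassKInf (δ₂ i))
    (σ' : Fin N → ℝ≥0 → ℝ≥0) (hσ : ∀ i, ClassKInf (σ' i))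
    (d₂inv : Fin N → ℝ≥0 → ℝ≥0)
    (hd₂inv : ∀ i, Function.LeftInverse (d₂inv i) (fun s => s + δ₂ i s) ∧
      Function.RightInverse (d₂inv i) (fun s => s + δ₂ i s)) :
    (∀ i, ClassKInf fun r => d₂inv i (σ' i r)) ∧
    ((∀ (i : Fin N) (r : ℝ≥0), 0 < r →
        (gainOp γ (fun j => σ' j r) i + δ₁ i (gainOp γ (fun j => σ' j r) i)) +
          δ₂ i (gainOp γ (fun j => σ' j r) i +
            δ₁ i (gainOp γ (fun j => σ' j r) i)) < σ' i r) ↔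
      (∀ (i : Fin N) (r : ℝ≥0), 0 < r →
        gainOp γ (fun j => d₂inv j (σ' j r) + δ₂ j (d₂inv j (σ' j r))) i +
          δ₁ i (gainOp γ
            (fun j => d₂inv j (σ' j r) + δ₂ j (d₂inv j (σ' j r))) i) <
          d₂inv i (σ' i r))) := by
  have hf : ∀ i, StrictMono (fun s => s + δ₂ i s) := fun i a b hab =>
    add_lt_add hab ((hδ₂ i).1.2.1 hab)
  have hfr : ∀ i x, d₂inv i x + δ₂ i (d₂inv i x) = x := fun i x => (hd₂inv i).2 x
  have hkey : ∀ i a b, (a + δ₂ i a < b ↔ a < d₂inv i b) := by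
    intro i a b
    constructor
    · intro h
      rw [← hfr i b] at h
      exact (hf i).lt_iff_lt.mp h
    · intro h
      have h2 := hf i h
      simp only at h2
      rwa [hfr i b] at h2
  have hginv_mono : ∀ i, StrictMono (d₂inv i) := by
    intro i a b hab
    obtain ⟨x, hx⟩ := (hd₂inv i).2.surjective a
    obtain ⟨y, hy⟩ := (hd₂inv i).2.surjective b
    subst hx; subst hy
    rw [(hd₂inv i).1 x, (hd₂inv i).1 y]
    exact (hf i).lt_iff_lt.mp hab
  have hgzero : ∀ i, d₂inv i 0 = 0 := by
    intro i
    have h0 : (fun s => s + δ₂ i s) 0 = 0 := by simp [(hδ₂ i).1.2.2]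
    have := (hd₂inv i).1 0
    simpa [h0] using this
  have hgsurj : ∀ i, Function.Surjective (d₂inv i) := fun i => (hd₂inv i).1.surjective
  have hgcont : ∀ i, Continuous (d₂inv i) := by
    intro i
    let e := StrictMono.orderIsoOfSurjective _ (hf i) (hd₂inv i).2.surjective
    have he : d₂inv i = ⇑e.symm := by
      funext x
      apply (hf i).injective
      have h1 : (fun s => s + δ₂ i s) (e.symm x) = x := by
        have h2 := e.apply_symm_apply x
        rwa [show ⇑e = (fun s => s + δ₂ i s) from
          StrictMono.coe_orderIsoOfSurjective _ _ _] at h2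
      simp only [hfr i x, h1]
    rw [he]
    exact e.symm.continuous
  have hgtop : ∀ i, Filter.Tendsto (d₂inv i) Filter.atTop Filter.atTop := by
    intro i
    apply Monotone.tendsto_atTop_atTop (hginv_mono i).monotone
    intro b
    obtain ⟨a, ha⟩ := hgsurj i b
    exact ⟨a, ha.ge⟩
  constructor
  · intro i
    refine ⟨⟨(hgcont i).comp (hσ i).1.1, (hginv_mono i).comp (hσ i).1.2.1, ?_⟩, ?_⟩
    · show d₂inv i (σ' i 0) = 0
      rw [(hσ i).1.2.2, hgzero i]
    · exact (hgtop i).comp (hσ i).2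
  · have harg : ∀ (r : ℝ≥0),
        (fun j => d₂inv j (σ' j r) + δ₂ j (d₂inv j (σ' j r))) = fun j => σ' j r := by
      intro r; funext j; exact hfr j (σ' j r)
    constructor
    · intro h i r hr
      rw [harg r]
      exact (hkey i _ _).mp (h i r hr)
    · intro h i r hr
      have := h i r hr
      rw [harg r] at this
      exact (hkey i _ _).mpr this
end

section
/- Define σ̃(s) := e^s − 1 and δ̂(s) := (s+1)(1 − (s+1)^{−1/(s+1)}) for s ≥ 0. Then σ̃ and id − δ̂ are of class K∞, the composition satisfies σ̃⁻¹((id − δ̂)(σ̃(s))) = s(1 − e^{−s}) for all s ≥ 0, and there exists no class-K∞ function α̂ such that s(1 − e^{−s}) = s − α̂(s) for all s ≥ 0. -/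
/-- A function α : ℝ → ℝ is of class K (on [0,∞)) if it is continuous and
strictly increasing on [0,∞) with α(0) = 0. -/
def ClassKOnReal (α : ℝ → ℝ) : Prop :=
  ContinuousOn α (Set.Ici 0) ∧ StrictMonoOn α (Set.Ici 0) ∧ α 0 = 0

/-- Class K∞ on [0,∞): class K and unbounded. -/
def ClassKInfOnReal (α : ℝ → ℝ) : Prop :=
  ClassKOnReal α ∧ Filter.Tendsto α Filter.atTop Filter.atTop

/-- σ̃(s) = eˢ − 1. -/
noncomputable def sigmaTilde (s : ℝ) : ℝ := Real.exp s - 1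

/-- δ̂(s) = (s+1)·(1 − (s+1)^(−1/(s+1))). -/
noncomputable def deltaHat (s : ℝ) : ℝ :=
  (s + 1) * (1 - (s + 1) ^ (-(1 / (s + 1))))

noncomputable def gfun (s : ℝ) : ℝ := (1 - 1 / (s + 1)) * Real.log (s + 1)

lemma key (s : ℝ) (hs : 0 ≤ s) :
    s - deltaHat s = Real.exp (gfun s) - 1 := by
  have h1 : (0:ℝ) < s + 1 := by linarith
  have hr : (s + 1) ^ (-(1 / (s + 1))) = Real.exp (-(1 / (s + 1)) * Real.log (s + 1)) := by
    rw [Real.rpow_def_of_pos h1]; ring_nf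
  have he : Real.exp (gfun s) =
      (s + 1) * Real.exp (-(1 / (s + 1)) * Real.log (s + 1)) := by
    unfold gfun
    rw [show (1 - 1 / (s + 1)) * Real.log (s + 1)
        = Real.log (s + 1) + (-(1 / (s + 1)) * Real.log (s + 1)) by ring,
      Real.exp_add, Real.exp_log h1]
  rw [deltaHat, hr, he]; ring

lemma gfun_strictMono : StrictMonoOn gfun (Set.Ici 0) := by
  intro a ha b hb hab
  simp only [Set.mem_Ici] at ha hb
  have hb1 : (0:ℝ) < b := lt_of_le_of_lt ha hab
  have ha1 : (0:ℝ) < a + 1 := by linarith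
  have hb2 : (0:ℝ) < b + 1 := by linarith
  have hfa : 0 ≤ 1 - 1 / (a + 1) := by
    have : 1 / (a + 1) ≤ 1 := by
      rw [div_le_one ha1]; linarith
    linarith
  have hfab : 1 - 1 / (a + 1) < 1 - 1 / (b + 1) := by
    have : 1 / (b + 1) < 1 / (a + 1) := by
      apply one_div_lt_one_div_of_lt ha1; linarith
    linarith
  have hla : 0 ≤ Real.log (a + 1) := Real.log_nonneg (by linarith)
  have hlab : Real.log (a + 1) ≤ Real.log (b + 1) :=
    Real.log_le_log (by linarith) (by linarith)
  have hlb : 0 < Real.log (b + 1) := Real.log_pos (by linarith)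
  unfold gfun
  calc (1 - 1 / (a + 1)) * Real.log (a + 1)
      ≤ (1 - 1 / (a + 1)) * Real.log (b + 1) := by
        apply mul_le_mul_of_nonneg_left hlab hfa
    _ < (1 - 1 / (b + 1)) * Real.log (b + 1) := by
        apply mul_lt_mul_of_pos_right hfab hlb

lemma gfun_tendsto : Filter.Tendsto gfun Filter.atTop Filter.atTop := by
  have h1 : Filter.Tendsto (fun s : ℝ => 1 - 1 / (s + 1)) Filter.atTop (nhds 1) := by
    have : Filter.Tendsto (fun s : ℝ => 1 / (s + 1)) Filter.atTop (nhds 0) :=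
      Filter.Tendsto.div_atTop tendsto_const_nhds
        (Filter.tendsto_atTop_add_const_right _ 1 Filter.tendsto_id)
    simpa using (tendsto_const_nhds.sub this)
  have h2 : Filter.Tendsto (fun s : ℝ => Real.log (s + 1)) Filter.atTop Filter.atTop :=
    Real.tendsto_log_atTop.comp (Filter.tendsto_atTop_add_const_right _ 1 Filter.tendsto_id)
  exact Filter.Tendsto.pos_mul_atTop one_pos h1 h2

lemma sd_eq : Set.EqOn (fun s => s - deltaHat s) (fun s => Real.exp (gfun s) - 1) (Set.Ici 0) :=
  fun s hs => key s hs

/-- σ̃ and id − δ̂ are of class K∞, the composition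
σ̃⁻¹ ∘ (id − δ̂) ∘ σ̃ (with σ̃⁻¹(t) = log(t+1)) equals s(1 − e^{−s}), and no
class-K∞ function α̂ satisfies s(1 − e^{−s}) = s − α̂(s) on [0,∞). -/
theorem no_KInf_remainder_example :
    ClassKInfOnReal sigmaTilde ∧
    ClassKInfOnReal (fun s => s - deltaHat s) ∧
    (∀ s : ℝ, 0 ≤ s →
      Real.log ((sigmaTilde s - deltaHat (sigmaTilde s)) + 1) =
        s * (1 - Real.exp (-s))) ∧
    ¬ ∃ αhat : ℝ → ℝ, ClassKInfOnReal αhat ∧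
        ∀ s : ℝ, 0 ≤ s → s * (1 - Real.exp (-s)) = s - αhat s := by
  refine ⟨⟨⟨?_, ?_, ?_⟩, ?_⟩, ⟨⟨?_, ?_, ?_⟩, ?_⟩, ?_, ?_⟩
  · exact (Real.continuous_exp.sub continuous_const).continuousOn
  · intro a _ b _ hab
    simp only [sigmaTilde]
    have := Real.exp_lt_exp.2 hab
    linarith
  · simp [sigmaTilde]
  · exact Filter.tendsto_atTop_add_const_right _ (-1)
      Real.tendsto_exp_atTop |>.congr (by intro x; simp [sigmaTilde]; ring)
  · -- continuity of s - deltaHat s on Ici 0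
    apply ContinuousOn.congr (f := fun s => Real.exp (gfun s) - 1)
    · apply ContinuousOn.sub _ continuousOn_const
      apply Real.continuous_exp.comp_continuousOn
      unfold gfun
      apply ContinuousOn.mul
      · apply ContinuousOn.sub continuousOn_const
        apply ContinuousOn.div continuousOn_const
          (by fun_prop)
        intro x hx; simp only [Set.mem_Ici] at hx; positivity
      · apply Real.continuousOn_log.comp (by fun_prop)
        intro x hx; simp only [Set.mem_Ici] at hx
        simp only [Set.mem_compl_iff, Set.mem_singleton_iff]
        positivity
    · exact sd_eq
  · -- strict mono
    intro a ha b hb hab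
    have := gfun_strictMono ha hb hab
    have h2 := Real.exp_lt_exp.2 this
    simp only
    rw [key a ha, key b hb]
    linarith
  · simp [deltaHat]
  · apply Filter.Tendsto.congr' (f₁ := fun s => Real.exp (gfun s) - 1)
    · filter_upwards [Filter.eventually_ge_atTop (0:ℝ)] with s hs
      exact (key s hs).symm
    · exact Filter.tendsto_atTop_add_const_right _ (-1)
        (Real.tendsto_exp_atTop.comp gfun_tendsto) |>.congr (by intro x; simp; ring)
  · -- composition identity
    intro s hs
    have hst : 0 ≤ sigmaTilde s := by
      simp only [sigmaTilde, sub_nonneg]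
      exact Real.one_le_exp hs
    rw [key _ hst]
    have : gfun (sigmaTilde s) = s * (1 - Real.exp (-s)) := by
      unfold gfun sigmaTilde
      rw [show Real.exp s - 1 + 1 = Real.exp s by ring, Real.log_exp,
        Real.exp_neg]
      have := (Real.exp_pos s).ne'
      field_simp
    rw [sub_add_cancel, Real.log_exp, this]
  · -- no K∞ remainder
    rintro ⟨αhat, ⟨_, htop⟩, heq⟩
    have heq' : ∀ s : ℝ, 0 ≤ s → αhat s = s * Real.exp (-s) := by
      intro s hs
      have := heq s hs
      nlinarith [this]
    have h0 : Filter.Tendsto (fun s : ℝ => s * Real.exp (-s)) Filter.atTop (nhds 0) := by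
      have := Real.tendsto_pow_mul_exp_neg_atTop_nhds_zero 1
      simpa using this
    have htop' : Filter.Tendsto (fun s : ℝ => s * Real.exp (-s)) Filter.atTop Filter.atTop := by
      apply htop.congr'
      filter_upwards [Filter.eventually_ge_atTop (0:ℝ)] with s hs
      exact heq' s hs
    have h1 := htop'.eventually_ge_atTop 1
    have h2 := h0.eventually (gt_mem_nhds (by norm_num : (0:ℝ) < 1))
    obtain ⟨s, hs1, hs2⟩ := (h1.and h2).exists
    linarith
end
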